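/- Let Γ = [T:Type; a:T→T; b:T→T; c:T; d:T; P:T→Type; F:Πx:T.((P x)→T)] and let t be a normal term of type (T→T)→...→(T→T)→T (n arguments) in Γ such that the normal form of (t (λy:T.y) ... (λy:T.y)) equals c. Then t has the form λx₁:T→T...λxₙ:T→T.(x_{i₁} (... (x_{iₚ} c)...)) for some (possibly empty) sequence of indices i₁,...,iₚ ∈ {1,...,n}. -/

import Mathlib

namespace LamPi

/-- Terms of the λΠ-calculus (de Bruijn indices). -/
inductive Tm : Type
  | type | kind
  | var (n : ℕ)
  | app (t u : Tm)
  | lam (A b : Tm)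
  | pi  (A B : Tm)
deriving DecidableEq

/-- Lift free variables ≥ d by one. -/
def lift (d : ℕ) : Tm → Tm
  | .type => .type
  | .kind => .kind
  | .var n => if n < d then .var n else .var (n + 1)
  | .app t u => .app (lift d t) (lift d u)
  | .lam A b => .lam (lift d A) (lift (d + 1) b)
  | .pi A B => .pi (lift d A) (lift (d + 1) B)

def liftN (k : ℕ) (t : Tm) : Tm := (lift 0)^[k] t

/-- Substitute u for the variable k. -/
def subst (k : ℕ) (u : Tm) : Tm → Tm
  | .type => .type
  | .kind => .kind
  | .var n => if n = k then u else if k < n then .var (n - 1) else .var n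
  | .app t t' => .app (subst k u t) (subst k u t')
  | .lam A b => .lam (subst k u A) (subst (k + 1) (lift 0 u) b)
  | .pi A B => .pi (subst k u A) (subst (k + 1) (lift 0 u) B)

/-- One-step β-reduction. -/
inductive Step : Tm → Tm → Prop
  | beta (A b u) : Step (.app (.lam A b) u) (subst 0 u b)
  | appL {t t'} (u) : Step t t' → Step (.app t u) (.app t' u)
  | appR (t) {u u'} : Step u u' → Step (.app t u) (.app t u')
  | lamA {A A'} (b) : Step A A' → Step (.lam A b) (.lam A' b)
  | lamB (A) {b b'} : Step b b' → Step (.lam A b) (.lam A b')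
  | piA {A A'} (B) : Step A A' → Step (.pi A B) (.pi A' B)
  | piB (A) {B B'} : Step B B' → Step (.pi A B) (.pi A B')

/-- Many-step β-reduction. -/
def Red : Tm → Tm → Prop := Relation.ReflTransGen Step

/-- β-equivalence ≅. -/
def Conv : Tm → Tm → Prop := Relation.EqvGen Step

/-- A term is normal if it contains no β-redex. -/
def Normal (t : Tm) : Prop := ∀ u, ¬ Step t u

def IsSort (s : Tm) : Prop := s = .type ∨ s = .kind

mutual
  /-- Well-formed contexts (head of the list is the most recent declaration). -/
  inductive WF : List Tm → Prop
    | nil : WF []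
    | cons {Γ A s} : Typing Γ A s → IsSort s → WF (A :: Γ)
  /-- The typing judgement Γ ⊢ t : T of the λΠ-calculus. -/
  inductive Typing : List Tm → Tm → Tm → Prop
    | sort {Γ} : WF Γ → Typing Γ .type .kind
    | var {Γ n A} : WF Γ → Γ[n]? = some A → Typing Γ (.var n) (liftN (n + 1) A)
    | pi {Γ A B s} : Typing Γ A .type → Typing (A :: Γ) B s → IsSort s →
        Typing Γ (.pi A B) s
    | lam {Γ A B b s} : Typing Γ (.pi A B) s → IsSort s → Typing (A :: Γ) b B →
        Typing Γ (.lam A b) (.pi A B)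
    | app {Γ t u A B} : Typing Γ t (.pi A B) → Typing Γ u A →
        Typing Γ (.app t u) (subst 0 u B)
    | conv {Γ t A B s} : Typing Γ t A → Typing Γ A s → Typing Γ B s → IsSort s →
        Conv A B → Typing Γ t B
end

/-- t is an object in Γ : it has a type T with Γ ⊢ T : Type. -/
def IsObject (Γ : List Tm) (t : Tm) : Prop := ∃ T, Typing Γ t T ∧ Typing Γ T .type

/-- The context Γ = [T:Type; a:T→T; b:T→T; c:T; d:T; P:T→Type; F:Πx:T.((P x)→T)].
Most recent declaration first: F = var 0, P = var 1, d = var 2, c = var 3,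
b = var 4, a = var 5, T = var 6. -/
def Ctx0 : List Tm :=
  [ .pi (.var 5) (.pi (.app (.var 1) (.var 0)) (.var 7)),  -- F : Πx:T.((P x) → T)
    .pi (.var 4) .type,                                    -- P : T → Type
    .var 3,                                                -- d : T
    .var 2,                                                -- c : T
    .pi (.var 1) (.var 2),                                 -- b : T → T
    .pi (.var 0) (.var 1),                                 -- a : T → T
    .type ]                                                -- T : Type

/-- The two-letter alphabet {A, B}. -/
inductive AB : Type
  | A | B
deriving DecidableEq

instance : Primcodable AB :=
  Primcodable.ofEquiv Bool
    ⟨fun x => match x with | .A => false | .B => true,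
     fun b => if b then .B else .A,
     fun x => by cases x <;> rfl, fun b => by cases b <;> rfl⟩

/-- The encoding φ̂ of a word φ over {A,B} as a term of type T → T in Ctx0:
ε̂ = λy:T.y, (Aφ)̂ = λy:T.(a (φ̂ y)), (Bφ)̂ = λy:T.(b (φ̂ y)). -/
def hat : List AB → Tm
  | [] => .lam (.var 6) (.var 0)
  | .A :: w => .lam (.var 6) (.app (.var 6) (.app (lift 0 (hat w)) (.var 0)))
  | .B :: w => .lam (.var 6) (.app (.var 5) (.app (lift 0 (hat w)) (.var 0)))

/-- λy:T.y in Ctx0. -/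
def idT : Tm := .lam (.var 6) (.var 0)

/-- Iterated application (h u₁ ... uₙ). -/
def appList : Tm → List Tm → Tm
  | h, [] => h
  | h, u :: us => appList (.app h u) us

/-- Iterated abstraction λx₁:T₁....λxₙ:Tₙ.b. -/
def absList : List Tm → Tm → Tm
  | [], b => b
  | A :: Ts, b => .lam A (absList Ts b)

/-- A solution of the Post problem: a nonempty sequence of indices whose
φ-concatenation equals its ψ-concatenation. -/
def HasSolution (pcp : List (List AB × List AB)) : Prop :=
  ∃ is : List (Fin pcp.length), is ≠ [] ∧
    (is.map fun i => (pcp.get i).1).flatten = (is.map fun i => (pcp.get i).2).flatten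

/-- Head symbols: a free variable, a top variable (bound by one of the leading
abstractions), a sort, or (by convention) Π. -/
inductive HeadSym : Type
  | fvar (n : ℕ) | bvar (i : ℕ) | sType | sKind | hpi
deriving DecidableEq

def headSymbolAux : ℕ → Tm → HeadSym
  | d, .lam _ b => headSymbolAux (d + 1) b
  | d, .app t _ => headSymbolAux d t
  | _, .pi _ _ => .hpi
  | _, .type => .sType
  | _, .kind => .sKind
  | d, .var n => if n < d then .bvar (d - 1 - n) else .fvar (n - d)

/-- The head symbol of a term (`bvar i` means the i-th top variable). -/
def headSymbol (t : Tm) : HeadSym := headSymbolAux 0 t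

/-- (T→T) → ... → (T→T) → T with n arguments, where T is the variable k. -/
def nArr (k : ℕ) : ℕ → Tm
  | 0 => .var k
  | n + 1 => .pi (.pi (.var k) (.var (k + 1))) (nArr (k + 1) n)

/-- (T→T) → ... → (T→T) → Type with n arguments, where T is the variable k. -/
def nArrTy (k : ℕ) : ℕ → Tm
  | 0 => .type
  | n + 1 => .pi (.pi (.var k) (.var (k + 1))) (nArrTy (k + 1) n)

/-- λx₁:T→T....λxₙ:T→T.body, where T is the variable k. -/
def lamChain (k : ℕ) : ℕ → Tm → Tm
  | 0, body => body
  | n + 1, body => .lam (.pi (.var k) (.var (k + 1))) (lamChain (k + 1) n body)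

/-- Πx₁:T→T....Πxₙ:T→T.body, where T is the variable k. -/
def piChain (k : ℕ) : ℕ → Tm → Tm
  | 0, body => body
  | n + 1, body => .pi (.pi (.var k) (.var (k + 1))) (piChain (k + 1) n body)

/-- (x_{i₁} (... (x_{iₚ} c)...)) under n leading binders in Ctx0: the j-th top
variable (0-indexed) is de Bruijn variable n-1-j, and c is variable 3+n. -/
def spine (n : ℕ) (is : List ℕ) : Tm :=
  is.foldr (fun i acc => .app (.var (n - 1 - i)) acc) (.var (3 + n))

/-- Pure (untyped) λ-terms. `fvar j` denotes the j-th free variable counted from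
the bottom of the ambient context (so it is stable under context extension);
`bvar` is a de Bruijn index for bound variables. -/
inductive PTm : Type
  | bvar (n : ℕ) | fvar (n : ℕ) | app (t u : PTm) | lam (t : PTm)
deriving DecidableEq

/-- The content |t| of a term: erase all type annotations. L is the length of
the ambient context, d the current binding depth. -/
def eraseAux (L : ℕ) : ℕ → Tm → PTm
  | d, .var n => if n < d then .bvar n else .fvar (L - 1 - (n - d))
  | d, .app t u => .app (eraseAux L d t) (eraseAux L d u)
  | d, .lam _ b => .lam (eraseAux L (d + 1) b)
  | _, _ => .bvar 0

def erase (L : ℕ) (t : Tm) : PTm := eraseAux L 0 t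

/-- A pure term p is typable in Γ if some well-typed object t' in an extension
Δ ++ Γ of Γ has content p. -/
def Typable (Γ : List Tm) (p : PTm) : Prop :=
  ∃ (Δ : List Tm) (t : Tm), IsObject (Δ ++ Γ) t ∧ erase (Δ.length + Γ.length) t = p

/-- An injective Gödel numbering of pure terms. -/
def PTm.enc : PTm → ℕ
  | .bvar n => Nat.pair 0 n
  | .fvar n => Nat.pair 1 n
  | .app t u => Nat.pair 2 (Nat.pair t.enc u.enc)
  | .lam t => Nat.pair 3 t.enc

/-- The untyped erasure φ̃ = |φ̂| of the encoding of a word (in Ctx0: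
a = fvar 1, b = fvar 2). -/
def tilde : List AB → PTm
  | [] => .lam (.bvar 0)
  | .A :: w => .lam (.app (.fvar 1) (.app (tilde w) (.bvar 0)))
  | .B :: w => .lam (.app (.fvar 2) (.app (tilde w) (.bvar 0)))

def pAppList : PTm → List PTm → PTm
  | h, [] => h
  | h, u :: us => pAppList (.app h u) us

/-- The pure term t = λf.λg.λh.(f (g a ... a) (h (g φ̃₁ ... φ̃ₙ)) (h (g ψ̃₁ ... ψ̃ₙ))
(F c (g (λy.y) ... (λy.y))) (F d (g (λy.d) ... (λy.d)))) associated to a Post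
problem (in Ctx0: a = fvar 1, c = fvar 3, d = fvar 4, F = fvar 6;
f = bvar 2, g = bvar 1, h = bvar 0 under the three abstractions). -/
def postTerm (pcp : List (List AB × List AB)) : PTm :=
  let n := pcp.length
  .lam (.lam (.lam (pAppList (.bvar 2)
    [ pAppList (.bvar 1) (List.replicate n (.fvar 1)),
      .app (.bvar 0) (pAppList (.bvar 1) (pcp.map fun pr => tilde pr.1)),
      .app (.bvar 0) (pAppList (.bvar 1) (pcp.map fun pr => tilde pr.2)),
      .app (.app (.fvar 6) (.fvar 3)) (pAppList (.bvar 1) (List.replicate n (.lam (.bvar 0)))),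
      .app (.app (.fvar 6) (.fvar 4)) (pAppList (.bvar 1) (List.replicate n (.lam (.fvar 4)))) ])))

/-! ### Simply typed λ-calculus -/

/-- Simple types over one base type T. -/
inductive STy : Type
  | base | arr (A B : STy)
deriving DecidableEq

/-- Curry-style simple typing of pure terms: Φ types the free variables
(fvar j has type Φ.get? j), Γ the bound ones. -/
inductive SJC : List STy → List STy → PTm → STy → Prop
  | bvar {Φ Γ n A} : Γ[n]? = some A → SJC Φ Γ (.bvar n) A
  | fvar {Φ Γ n A} : Φ[n]? = some A → SJC Φ Γ (.fvar n) A
  | app {Φ Γ t u A B} : SJC Φ Γ t (.arr A B) → SJC Φ Γ u A → SJC Φ Γ (.app t u) B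
  | lam {Φ Γ t A B} : SJC Φ (A :: Γ) t B → SJC Φ Γ (.lam t) (.arr A B)

/-- A pure term is typable in the simply typed λ-calculus. -/
def STypable (p : PTm) : Prop := ∃ Φ A, SJC Φ [] p A

/-- Church-style simply typed terms with constants a, b : T→T and c, d : T. -/
inductive STm : Type
  | var (n : ℕ) | ca | cb | cc | cd | app (t u : STm) | lam (A : STy) (b : STm)
deriving DecidableEq

def slift (d : ℕ) : STm → STm
  | .var n => if n < d then .var n else .var (n + 1)
  | .ca => .ca | .cb => .cb | .cc => .cc | .cd => .cd
  | .app t u => .app (slift d t) (slift d u)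
  | .lam A b => .lam A (slift (d + 1) b)

def ssubst (k : ℕ) (u : STm) : STm → STm
  | .var n => if n = k then u else if k < n then .var (n - 1) else .var n
  | .ca => .ca | .cb => .cb | .cc => .cc | .cd => .cd
  | .app t t' => .app (ssubst k u t) (ssubst k u t')
  | .lam A b => .lam A (ssubst (k + 1) (slift 0 u) b)

inductive SStep : STm → STm → Prop
  | beta (A b u) : SStep (.app (.lam A b) u) (ssubst 0 u b)
  | appL {t t'} (u) : SStep t t' → SStep (.app t u) (.app t' u)
  | appR (t) {u u'} : SStep u u' → SStep (.app t u) (.app t u')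
  | lamB (A) {b b'} : SStep b b' → SStep (.lam A b) (.lam A b')

def SConv : STm → STm → Prop := Relation.EqvGen SStep

inductive ST : List STy → STm → STy → Prop
  | var {Γ n A} : Γ[n]? = some A → ST Γ (.var n) A
  | ca {Γ} : ST Γ .ca (.arr .base .base)
  | cb {Γ} : ST Γ .cb (.arr .base .base)
  | cc {Γ} : ST Γ .cc .base
  | cd {Γ} : ST Γ .cd .base
  | app {Γ t u A B} : ST Γ t (.arr A B) → ST Γ u A → ST Γ (.app t u) B
  | lam {Γ A B b} : ST (A :: Γ) b B → ST Γ (.lam A b) (.arr A B)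

/-- The third-order type (T→T) → ... → (T→T) → T with n arguments. -/
def nSTy : ℕ → STy
  | 0 => .base
  | n + 1 => .arr (.arr .base .base) (nSTy n)

def sAppList : STm → List STm → STm
  | h, [] => h
  | h, u :: us => sAppList (.app h u) us

def STm.enc : STm → ℕ
  | .var n => Nat.pair 0 n
  | .ca => Nat.pair 1 0
  | .cb => Nat.pair 1 1
  | .cc => Nat.pair 1 2
  | .cd => Nat.pair 1 3
  | .app t u => Nat.pair 2 (Nat.pair t.enc u.enc)
  | .lam _ b => Nat.pair 3 b.enc

def encList (l : List ℕ) : ℕ := l.foldr (fun a b => Nat.pair a b + 1) 0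

/-- Gödel numbering of a unification problem
(f t₁...tₙ) = (f t'₁...t'ₙ), (f u₁...uₙ) = u', (f v₁...vₙ) = v'. -/
def encP (n : ℕ) (ts ts' us vs : List STm) (u' v' : STm) : ℕ :=
  Nat.pair n (Nat.pair (encList (ts.map STm.enc)) (Nat.pair (encList (ts'.map STm.enc))
    (Nat.pair (encList (us.map STm.enc)) (Nat.pair (encList (vs.map STm.enc))
      (Nat.pair u'.enc v'.enc)))))

/-- The unification system has a common solution for f. -/
def HasUnifSolution (n : ℕ) (ts ts' us vs : List STm) (u' v' : STm) : Prop :=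
  ∃ f : STm, ST [] f (nSTy n) ∧
    SConv (sAppList f ts) (sAppList f ts') ∧
    SConv (sAppList f us) u' ∧
    SConv (sAppList f vs) v'

end LamPi

namespace LamPi

/-! ### Basic facts about normal terms and reduction -/

theorem normal_var (n : ℕ) : Normal (.var n) := by rintro u h; cases h

theorem normal_type : Normal .type := by rintro u h; cases h
theorem normal_kind : Normal .kind := by rintro u h; cases h

theorem normal_lam {A b} (h : Normal (.lam A b)) : Normal A ∧ Normal b :=
  ⟨fun u hu => h _ (Step.lamA _ hu), fun u hu => h _ (Step.lamB _ hu)⟩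

theorem normal_app {t u} (h : Normal (.app t u)) :
    Normal t ∧ Normal u ∧ ∀ A c, t ≠ .lam A c := by
  refine ⟨fun v hv => h _ (Step.appL _ hv), fun v hv => h _ (Step.appR _ hv), ?_⟩
  rintro A c rfl; exact h _ (Step.beta A c u)

theorem normal_app_var {k : ℕ} {u} (h : Normal u) : Normal (.app (.var k) u) := by
  rintro v hv
  cases hv with
  | appL _ h' => cases h'
  | appR _ h' => exact h _ h'

theorem normal_red {t u} (h : Normal t) (hr : Red t u) : u = t := by
  induction hr using Relation.ReflTransGen.head_induction_on with
  | refl => rfl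
  | head h' _ _ => exact absurd h' (h _)

theorem red_var {n u} (h : Red (.var n) u) : u = .var n := normal_red (normal_var n) h
theorem red_type {u} (h : Red .type u) : u = .type := normal_red normal_type h
theorem red_kind {u} (h : Red .kind u) : u = .kind := normal_red normal_kind h

theorem red_pi {A B u} (h : Red (.pi A B) u) :
    ∃ A' B', u = .pi A' B' ∧ Red A A' ∧ Red B B' := by
  induction h with
  | refl => exact ⟨A, B, rfl, .refl, .refl⟩
  | tail _ h2 ih =>
    obtain ⟨A', B', rfl, hA, hB⟩ := ih
    cases h2 with
    | piA _ h3 => exact ⟨_, _, rfl, hA.tail h3, hB⟩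
    | piB _ h3 => exact ⟨_, _, rfl, hA, hB.tail h3⟩

/-! ### Congruence of Red -/

theorem red_appL {t t' u} (h : Red t t') : Red (.app t u) (.app t' u) := by
  induction h with
  | refl => exact .refl
  | tail _ h2 ih => exact ih.tail (Step.appL _ h2)

theorem red_appR {t u u'} (h : Red u u') : Red (.app t u) (.app t u') := by
  induction h with
  | refl => exact .refl
  | tail _ h2 ih => exact ih.tail (Step.appR _ h2)

theorem red_app {t t' u u'} (h : Red t t') (h' : Red u u') :
    Red (.app t u) (.app t' u') := (red_appL h).trans (red_appR h')

theorem red_lam {A A' b b'} (h : Red A A') (h' : Red b b') :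
    Red (.lam A b) (.lam A' b') := by
  have h1 : Red (Tm.lam A b) (.lam A' b) := by
    induction h with
    | refl => exact .refl
    | tail _ h2 ih => exact ih.tail (Step.lamA _ h2)
  refine h1.trans ?_
  induction h' with
  | refl => exact .refl
  | tail _ h2 ih => exact ih.tail (Step.lamB _ h2)

theorem red_pi_cong {A A' B B'} (h : Red A A') (h' : Red B B') :
    Red (.pi A B) (.pi A' B') := by
  have h1 : Red (Tm.pi A B) (.pi A' B) := by
    induction h with
    | refl => exact .refl
    | tail _ h2 ih => exact ih.tail (Step.piA _ h2)
  refine h1.trans ?_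
  induction h' with
  | refl => exact .refl
  | tail _ h2 ih => exact ih.tail (Step.piB _ h2)

/-! ### de Bruijn lemmas -/

theorem lift_lift (t : Tm) : ∀ c d, c ≤ d → lift c (lift d t) = lift (d+1) (lift c t) := by
  induction t with
  | type => intros; rfl
  | kind => intros; rfl
  | var n =>
    intro c d h
    simp only [lift]; split_ifs <;> simp only [lift] <;> split_ifs <;>
      simp only [Tm.var.injEq] <;> omega
  | app a b iha ihb => intro c d h; simp only [lift, iha _ _ h, ihb _ _ h]
  | lam A b ihA ihb =>
    intro c d h
    simp only [lift, ihA _ _ h, ihb (c+1) (d+1) (by omega)]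
  | pi A B ihA ihB =>
    intro c d h
    simp only [lift, ihA _ _ h, ihB (c+1) (d+1) (by omega)]

theorem subst_lift (t : Tm) : ∀ j u, subst j u (lift j t) = t := by
  induction t with
  | type => intros; rfl
  | kind => intros; rfl
  | var n =>
    intro j u
    simp only [lift]; split_ifs <;> simp only [subst] <;> split_ifs <;>
      first | (exfalso; omega) | (simp only [Tm.var.injEq]; try omega)
  | app a b iha ihb => intro j u; simp only [lift, subst, iha, ihb]
  | lam A b ihA ihb => intro j u; simp only [lift, subst, ihA, ihb]
  | pi A B ihA ihB => intro j u; simp only [lift, subst, ihA, ihB]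

theorem lift_subst_le (t : Tm) : ∀ k d u, k ≤ d →
    lift d (subst k u t) = subst k (lift d u) (lift (d+1) t) := by
  induction t with
  | type => intros; rfl
  | kind => intros; rfl
  | var n =>
    intro k d u h
    simp only [lift, subst]
    split_ifs <;> simp only [lift, subst] <;> split_ifs <;>
      first | rfl | (exfalso; omega) | (simp only [Tm.var.injEq]; try omega)
  | app a b iha ihb => intro k d u h; simp only [lift, subst, iha _ _ _ h, ihb _ _ _ h]
  | lam A b ihA ihb =>
    intro k d u h
    simp only [lift, subst, ihA _ _ _ h, ihb (k+1) (d+1) (lift 0 u) (by omega)]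
    rw [lift_lift u 0 d (by omega)]
  | pi A B ihA ihB =>
    intro k d u h
    simp only [lift, subst, ihA _ _ _ h, ihB (k+1) (d+1) (lift 0 u) (by omega)]
    rw [lift_lift u 0 d (by omega)]

theorem lift_subst_lt (t : Tm) : ∀ k d u, d ≤ k →
    lift d (subst k u t) = subst (k+1) (lift d u) (lift d t) := by
  induction t with
  | type => intros; rfl
  | kind => intros; rfl
  | var n =>
    intro k d u h
    simp only [lift, subst]
    split_ifs <;> simp only [lift, subst] <;> split_ifs <;>
      first | rfl | (exfalso; omega) | (simp only [Tm.var.injEq]; try omega)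
  | app a b iha ihb => intro k d u h; simp only [lift, subst, iha _ _ _ h, ihb _ _ _ h]
  | lam A b ihA ihb =>
    intro k d u h
    simp only [lift, subst, ihA _ _ _ h, ihb (k+1) (d+1) (lift 0 u) (by omega)]
    rw [lift_lift u 0 d (by omega)]
  | pi A B ihA ihB =>
    intro k d u h
    simp only [lift, subst, ihA _ _ _ h, ihB (k+1) (d+1) (lift 0 u) (by omega)]
    rw [lift_lift u 0 d (by omega)]

theorem subst_subst (t : Tm) : ∀ j k u v, j ≤ k →
    subst k u (subst j v t) = subst j (subst k u v) (subst (k+1) (lift j u) t) := by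
  induction t with
  | type => intros; rfl
  | kind => intros; rfl
  | var n =>
    intro j k u v h
    simp only [subst]
    split_ifs <;> (try simp only [subst]) <;> (try split_ifs) <;>
      first | rfl | (exfalso; omega) | (rw [subst_lift]) | (simp only [Tm.var.injEq]; try omega)
  | app a b iha ihb =>
    intro j k u v h; simp only [subst, iha _ _ _ _ h, ihb _ _ _ _ h]
  | lam A b ihA ihb =>
    intro j k u v h
    simp only [subst, ihA _ _ _ _ h, ihb (j+1) (k+1) (lift 0 u) (lift 0 v) (by omega)]
    rw [lift_subst_lt v k 0 u (by omega), lift_lift u 0 j (by omega)]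
  | pi A B ihA ihB =>
    intro j k u v h
    simp only [subst, ihA _ _ _ _ h, ihB (j+1) (k+1) (lift 0 u) (lift 0 v) (by omega)]
    rw [lift_subst_lt v k 0 u (by omega), lift_lift u 0 j (by omega)]
/-! ### Parallel reduction and confluence -/

inductive Par : Tm → Tm → Prop
  | type : Par .type .type
  | kind : Par .kind .kind
  | var (n) : Par (.var n) (.var n)
  | app {t t' u u'} : Par t t' → Par u u' → Par (.app t u) (.app t' u')
  | lam {A A' b b'} : Par A A' → Par b b' → Par (.lam A b) (.lam A' b')
  | pi {A A' B B'} : Par A A' → Par B B' → Par (.pi A B) (.pi A' B')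
  | beta (A) {b b' u u'} : Par b b' → Par u u' →
      Par (.app (.lam A b) u) (subst 0 u' b')

theorem Par.refl (t : Tm) : Par t t := by
  induction t with
  | type => exact .type
  | kind => exact .kind
  | var n => exact .var n
  | app a b iha ihb => exact .app iha ihb
  | lam A b ihA ihb => exact .lam ihA ihb
  | pi A B ihA ihB => exact .pi ihA ihB

theorem step_par {t u} (h : Step t u) : Par t u := by
  induction h with
  | beta A b u => exact Par.beta A (Par.refl b) (Par.refl u)
  | appL u _ ih => exact .app ih (Par.refl u)
  | appR t _ ih => exact .app (Par.refl t) ih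
  | lamA b _ ih => exact .lam ih (Par.refl b)
  | lamB A _ ih => exact .lam (Par.refl A) ih
  | piA B _ ih => exact .pi ih (Par.refl B)
  | piB A _ ih => exact .pi (Par.refl A) ih

theorem par_red {t u} (h : Par t u) : Red t u := by
  induction h with
  | type => exact .refl
  | kind => exact .refl
  | var n => exact .refl
  | app _ _ ih1 ih2 => exact red_app ih1 ih2
  | lam _ _ ih1 ih2 => exact red_lam ih1 ih2
  | pi _ _ ih1 ih2 => exact red_pi_cong ih1 ih2
  | beta A _ _ ih1 ih2 =>
    exact ((red_app (red_lam Relation.ReflTransGen.refl ih1) ih2).tail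
      (Step.beta A _ _))

theorem par_lift {t t'} (h : Par t t') : ∀ d, Par (lift d t) (lift d t') := by
  induction h with
  | type => intro d; exact .type
  | kind => intro d; exact .kind
  | var n => intro d; simp only [lift]; split_ifs <;> apply Par.refl
  | app _ _ ih1 ih2 => intro d; exact .app (ih1 d) (ih2 d)
  | lam _ _ ih1 ih2 => intro d; exact .lam (ih1 d) (ih2 (d+1))
  | pi _ _ ih1 ih2 => intro d; exact .pi (ih1 d) (ih2 (d+1))
  | beta A hb hu ih1 ih2 =>
    intro d
    rw [lift_subst_le _ 0 d _ (by omega)]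
    exact Par.beta (lift d A) (ih1 (d+1)) (ih2 d)

theorem par_subst {t t'} (h : Par t t') : ∀ k {u u'}, Par u u' →
    Par (subst k u t) (subst k u' t') := by
  induction h with
  | type => intro k u u' _; exact .type
  | kind => intro k u u' _; exact .kind
  | var n =>
    intro k u u' hu
    simp only [subst]; split_ifs <;> first | exact hu | apply Par.refl
  | app _ _ ih1 ih2 => intro k u u' hu; exact .app (ih1 k hu) (ih2 k hu)
  | lam _ _ ih1 ih2 =>
    intro k u u' hu; exact .lam (ih1 k hu) (ih2 (k+1) (par_lift hu 0))
  | pi _ _ ih1 ih2 =>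
    intro k u u' hu; exact .pi (ih1 k hu) (ih2 (k+1) (par_lift hu 0))
  | beta A hb hv ih1 ih2 =>
    intro k u u' hu
    rw [subst_subst _ 0 k _ _ (by omega)]
    simp only [subst]
    exact Par.beta _ (ih1 (k+1) (par_lift hu 0)) (ih2 k hu)

/-- Complete development. -/
def cd : Tm → Tm
  | .type => .type
  | .kind => .kind
  | .var n => .var n
  | .app (.lam _ b) u => subst 0 (cd u) (cd b)
  | .app t u => .app (cd t) (cd u)
  | .lam A b => .lam (cd A) (cd b)
  | .pi A B => .pi (cd A) (cd B)

theorem par_lam_inv {A b X} (h : Par (.lam A b) X) :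
    ∃ A' b', X = .lam A' b' ∧ Par A A' ∧ Par b b' := by
  cases h with
  | lam h1 h2 => exact ⟨_, _, rfl, h1, h2⟩

theorem par_triangle {t u} (h : Par t u) : Par u (cd t) := by
  induction h with
  | type => exact .type
  | kind => exact .kind
  | var n => exact .var n
  | app h1 h2 ih1 ih2 =>
    rename_i a a' b b'
    match a, h1, ih1 with
    | .lam A c, h1, ih1 =>
      obtain ⟨A', c', rfl, hA, hc⟩ := par_lam_inv h1
      obtain ⟨A'', c'', he, hA', hc'⟩ := par_lam_inv ih1
      simp only [cd] at he ⊢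
      cases he
      exact Par.beta A' hc' ih2
    | .type, h1, ih1 => exact Par.app ih1 ih2
    | .kind, h1, ih1 => exact Par.app ih1 ih2
    | .var n, h1, ih1 => exact Par.app ih1 ih2
    | .app x y, h1, ih1 => exact Par.app ih1 ih2
    | .pi x y, h1, ih1 => exact Par.app ih1 ih2
  | lam _ _ ih1 ih2 => exact .lam ih1 ih2
  | pi _ _ ih1 ih2 => exact .pi ih1 ih2
  | beta A hb hu ih1 ih2 =>
    simp only [cd]
    exact par_subst ih1 0 ih2

theorem par_diamond {t u v} (h1 : Par t u) (h2 : Par t v) :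
    ∃ w, Par u w ∧ Par v w :=
  ⟨cd t, par_triangle h1, par_triangle h2⟩

theorem conv_join {a b} (h : Conv a b) : ∃ c, Red a c ∧ Red b c := by
  have hp : Relation.EqvGen Par a b := Relation.EqvGen.mono (fun _ _ => step_par) _ _ h
  have key : ∀ x y, Relation.EqvGen Par x y →
      Relation.Join (Relation.ReflTransGen Par) x y := by
    intro x y hxy
    have hcr : ∀ a b c : Tm, Par a b → Par a c →
        ∃ d, Relation.ReflGen Par b d ∧ Relation.ReflTransGen Par c d := by
      intro a b c h1 h2
      obtain ⟨d, hd1, hd2⟩ := par_diamond h1 h2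
      exact ⟨d, .single hd1, .single hd2⟩
    have equiv := Relation.equivalence_join_reflTransGen hcr
    induction hxy with
    | rel x y h => exact ⟨y, .single h, .refl⟩
    | refl x => exact equiv.refl x
    | symm x y _ ih => exact equiv.symm ih
    | trans x y z _ _ ih1 ih2 => exact equiv.trans ih1 ih2
  obtain ⟨c, h1, h2⟩ := key a b hp
  have conv : ∀ {x y : Tm}, Relation.ReflTransGen Par x y → Red x y := by
    intro x y hxy
    induction hxy with
    | refl => exact .refl
    | tail _ h2 ih => exact ih.trans (par_red h2)
  exact ⟨c, conv h1, conv h2⟩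

/-! ### Consequences of confluence -/

theorem conv_red {a b} (h : Red a b) : Conv a b := by
  induction h with
  | refl => exact .refl _
  | tail _ h2 ih => exact ih.trans _ _ _ (.rel _ _ h2)

theorem conv_normal_eq {a b} (h : Conv a b) (ha : Normal a) (hb : Normal b) : a = b := by
  obtain ⟨c, h1, h2⟩ := conv_join h
  rw [← normal_red ha h1, ← normal_red hb h2]

theorem conv_pi_var {A B n} (h : Conv (.pi A B) (.var n)) : False := by
  obtain ⟨c, h1, h2⟩ := conv_join h
  obtain ⟨A', B', rfl, -, -⟩ := red_pi h1
  cases red_var h2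

theorem conv_pi_sort {A B s} (hs : IsSort s) (h : Conv (.pi A B) s) : False := by
  obtain ⟨c, h1, h2⟩ := conv_join h
  obtain ⟨A', B', rfl, -, -⟩ := red_pi h1
  rcases hs with rfl | rfl
  · cases red_type h2
  · cases red_kind h2

theorem conv_pi_normal {A B c} (hc : Normal c) (h : Conv (.pi A B) c)
    (hne : ∀ A' B', c ≠ .pi A' B') : False := by
  obtain ⟨d, h1, h2⟩ := conv_join h
  obtain ⟨A', B', rfl, -, -⟩ := red_pi h1
  exact hne A' B' (normal_red hc h2).symm

theorem conv_pi_inj {A B A' B'} (h : Conv (.pi A B) (.pi A' B')) :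
    Conv A A' ∧ Conv B B' := by
  obtain ⟨c, h1, h2⟩ := conv_join h
  obtain ⟨A1, B1, rfl, hA1, hB1⟩ := red_pi h1
  obtain ⟨A2, B2, he, hA2, hB2⟩ := red_pi h2
  cases he
  exact ⟨(conv_red hA1).trans _ _ _ ((conv_red hA2).symm _ _),
         (conv_red hB1).trans _ _ _ ((conv_red hB2).symm _ _)⟩

theorem conv_subst {B B'} (h : Conv B B') (k : ℕ) (u : Tm) :
    Conv (subst k u B) (subst k u B') := by
  induction h with
  | rel x y hxy =>
    have := par_subst (step_par hxy) k (Par.refl u)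
    exact conv_red (par_red this)
  | refl x => exact .refl _
  | symm x y _ ih => exact ih.symm _ _
  | trans x y z _ _ ih1 ih2 => exact ih1.trans _ _ _ ih2

theorem conv_normal_ne {a b : Tm} (ha : Normal a) (hb : Normal b) (hne : a ≠ b)
    (h : Conv a b) : False := hne (conv_normal_eq h ha hb)
/-! ### Typing inversion -/

theorem typing_ind {P : List Tm → Tm → Tm → Prop}
    (hsort : ∀ {Γ}, WF Γ → P Γ .type .kind)
    (hvar : ∀ {Γ n A}, WF Γ → Γ[n]? = some A → P Γ (.var n) (liftN (n+1) A))
    (hpi : ∀ {Γ A B s}, Typing Γ A .type → Typing (A :: Γ) B s → IsSort s →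
      P Γ A .type → P (A :: Γ) B s → P Γ (.pi A B) s)
    (hlam : ∀ {Γ A B b s}, Typing Γ (.pi A B) s → IsSort s → Typing (A :: Γ) b B →
      P Γ (.pi A B) s → P (A :: Γ) b B → P Γ (.lam A b) (.pi A B))
    (happ : ∀ {Γ t u A B}, Typing Γ t (.pi A B) → Typing Γ u A →
      P Γ t (.pi A B) → P Γ u A → P Γ (.app t u) (subst 0 u B))
    (hconv : ∀ {Γ t A B s}, Typing Γ t A → Typing Γ A s → Typing Γ B s → IsSort s →
      Conv A B → P Γ t A → P Γ A s → P Γ B s → P Γ t B) :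
    ∀ {Γ t C}, Typing Γ t C → P Γ t C := by
  intro Γ t C h
  refine Typing.rec (motive_1 := fun _ _ => True) (motive_2 := fun Γ t C _ => P Γ t C)
    ?_ ?_ ?_ ?_ ?_ ?_ ?_ ?_ h
  · trivial
  · intros; trivial
  · intro Γ hw _; exact hsort hw
  · intro Γ n A hw hg _; exact hvar hw hg
  · intro Γ A B s h1 h2 h3 ih1 ih2; exact hpi h1 h2 h3 ih1 ih2
  · intro Γ A B b s h1 h2 h3 ih1 ih2; exact hlam h1 h2 h3 ih1 ih2
  · intro Γ t u A B h1 h2 ih1 ih2; exact happ h1 h2 ih1 ih2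
  · intro Γ t A B s h1 h2 h3 h4 h5 ih1 ih2 ih3; exact hconv h1 h2 h3 h4 h5 ih1 ih2 ih3

def InvP (Γ : List Tm) (t C : Tm) : Prop :=
  match t with
  | .var n => ∃ A, Γ[n]? = some A ∧ Conv C (liftN (n+1) A)
  | .app a b => ∃ A B, Typing Γ a (.pi A B) ∧ Typing Γ b A ∧ Conv C (subst 0 b B)
  | .lam A b => ∃ B, Typing (A :: Γ) b B ∧ Conv C (.pi A B)
  | .pi _ _ => ∃ s, IsSort s ∧ Conv C s
  | .type => Conv C .kind
  | .kind => False

theorem typing_inv : ∀ {Γ t C}, Typing Γ t C → InvP Γ t C := by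
  refine typing_ind ?_ ?_ ?_ ?_ ?_ ?_
  · intro Γ _; exact .refl _
  · intro Γ n A _ hg; exact ⟨A, hg, .refl _⟩
  · intro Γ A B s _ _ hs _ _; exact ⟨s, hs, .refl _⟩
  · intro Γ A B b s _ _ hb _ _; exact ⟨B, hb, .refl _⟩
  · intro Γ t u A B h1 h2 _ _; exact ⟨A, B, h1, h2, .refl _⟩
  · intro Γ t A B s _ _ _ _ hc ih _ _
    have hBA : Conv B A := hc.symm _ _
    cases t with
    | var n => obtain ⟨A', h1, h2⟩ := ih; exact ⟨A', h1, hBA.trans _ _ _ h2⟩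
    | app a b => obtain ⟨X, Y, h1, h2, h3⟩ := ih; exact ⟨X, Y, h1, h2, hBA.trans _ _ _ h3⟩
    | lam A' b => obtain ⟨Y, h1, h2⟩ := ih; exact ⟨Y, h1, hBA.trans _ _ _ h2⟩
    | pi A' B' => obtain ⟨s', h1, h2⟩ := ih; exact ⟨s', h1, hBA.trans _ _ _ h2⟩
    | type => exact hBA.trans _ _ _ ih
    | kind => exact ih

theorem inv_var {Γ n C} (h : Typing Γ (.var n) C) :
    ∃ A, Γ[n]? = some A ∧ Conv C (liftN (n+1) A) := typing_inv h

theorem inv_app {Γ a b C} (h : Typing Γ (.app a b) C) :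
    ∃ A B, Typing Γ a (.pi A B) ∧ Typing Γ b A ∧ Conv C (subst 0 b B) := typing_inv h

theorem inv_lam {Γ A b C} (h : Typing Γ (.lam A b) C) :
    ∃ B, Typing (A :: Γ) b B ∧ Conv C (.pi A B) := typing_inv h

theorem inv_pi {Γ A B C} (h : Typing Γ (.pi A B) C) :
    ∃ s, IsSort s ∧ Conv C s := typing_inv h

theorem inv_type {Γ C} (h : Typing Γ .type C) : Conv C .kind := typing_inv h

theorem inv_kind {Γ C} (h : Typing Γ .kind C) : False := typing_inv h
/-! ### Variable-type computations and contexts -/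

theorem conv_trans {a b c} (h1 : Conv a b) (h2 : Conv b c) : Conv a c := h1.trans _ _ _ h2
theorem conv_symm {a b} (h : Conv a b) : Conv b a := h.symm _ _

theorem lift_var_ge {d j} (h : d ≤ j) : lift d (.var j) = .var (j+1) := by
  simp only [lift]; rw [if_neg (by omega)]

theorem lift_var_lt {d j} (h : j < d) : lift d (.var j) = .var j := by
  simp only [lift]; rw [if_pos h]

theorem subst_var_eq (k : ℕ) (u : Tm) : subst k u (.var k) = u := by simp [subst]

theorem subst_var_gt {k j} (h : k < j) (u : Tm) : subst k u (.var j) = .var (j-1) := by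
  simp only [subst]; rw [if_neg (by omega), if_pos h]

theorem subst_var_lt {k j} (h : j < k) (u : Tm) : subst k u (.var j) = .var j := by
  simp only [subst]; rw [if_neg (by omega), if_neg (by omega)]

theorem liftN_succ' (k : ℕ) (t : Tm) : liftN (k+1) t = lift 0 (liftN k t) :=
  Function.iterate_succ_apply' _ _ _

theorem liftN_one (t : Tm) : liftN 1 t = lift 0 t := by
  rw [liftN_succ']; rfl

def ctxN : ℕ → List Tm
  | 0 => Ctx0
  | m+1 => .pi (.var (6+m)) (.var (7+m)) :: ctxN m

/-- Canonical types for the variables of `ctxN m`. -/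
theorem ctxN_types : ∀ m k A, (ctxN m)[k]? = some A →
    (k < m ∧ liftN (k+1) A = .pi (.var (6+m)) (.var (7+m))) ∨
    (k = m ∧ liftN (k+1) A =
      .pi (.var (6+m)) (.pi (.app (.var (2+m)) (.var 0)) (.var (8+m)))) ∨
    (k = 1+m ∧ liftN (k+1) A = .pi (.var (6+m)) .type) ∨
    (k = 2+m ∧ liftN (k+1) A = .var (6+m)) ∨
    (k = 3+m ∧ liftN (k+1) A = .var (6+m)) ∨
    ((k = 4+m ∨ k = 5+m) ∧ liftN (k+1) A = .pi (.var (6+m)) (.var (7+m))) ∨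
    (k = 6+m ∧ liftN (k+1) A = .type) := by
  intro m
  induction m with
  | zero =>
    intro k A hg
    rcases k with _|_|_|_|_|_|_|k
    · simp only [ctxN, Ctx0, List.getElem?_cons_zero, List.getElem?_cons_succ, List.getElem?_nil, Option.some.injEq] at hg; cases hg
      refine .inr (.inl ⟨rfl, by decide⟩)
    · simp only [ctxN, Ctx0, List.getElem?_cons_zero, List.getElem?_cons_succ, List.getElem?_nil, Option.some.injEq] at hg; cases hg
      refine .inr (.inr (.inl ⟨rfl, by decide⟩))
    · simp only [ctxN, Ctx0, List.getElem?_cons_zero, List.getElem?_cons_succ, List.getElem?_nil, Option.some.injEq] at hg; cases hg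
      refine .inr (.inr (.inr (.inl ⟨rfl, by decide⟩)))
    · simp only [ctxN, Ctx0, List.getElem?_cons_zero, List.getElem?_cons_succ, List.getElem?_nil, Option.some.injEq] at hg; cases hg
      refine .inr (.inr (.inr (.inr (.inl ⟨rfl, by decide⟩))))
    · simp only [ctxN, Ctx0, List.getElem?_cons_zero, List.getElem?_cons_succ, List.getElem?_nil, Option.some.injEq] at hg; cases hg
      refine .inr (.inr (.inr (.inr (.inr (.inl ⟨.inl rfl, by decide⟩)))))
    · simp only [ctxN, Ctx0, List.getElem?_cons_zero, List.getElem?_cons_succ, List.getElem?_nil, Option.some.injEq] at hg; cases hg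
      refine .inr (.inr (.inr (.inr (.inr (.inl ⟨.inr rfl, by decide⟩)))))
    · simp only [ctxN, Ctx0, List.getElem?_cons_zero, List.getElem?_cons_succ, List.getElem?_nil, Option.some.injEq] at hg; cases hg
      refine .inr (.inr (.inr (.inr (.inr (.inr ⟨rfl, by decide⟩)))))
    · simp only [ctxN, Ctx0, List.getElem?_cons_zero, List.getElem?_cons_succ, List.getElem?_nil, Option.some.injEq] at hg; cases hg
  | succ m ih =>
    intro k A hg
    rcases k with _|k
    · simp only [ctxN, List.getElem?_cons_zero, List.getElem?_cons_succ, Option.some.injEq] at hg; cases hg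
      refine .inl ⟨Nat.succ_pos m, ?_⟩
      rw [liftN_one]
      simp only [lift]; split_ifs <;>
        first | (exfalso; omega)
              | (simp only [Tm.pi.injEq, Tm.app.injEq, Tm.var.injEq, and_true, true_and];
                 try omega)
              | rfl
    · simp only [ctxN, List.getElem?_cons_zero, List.getElem?_cons_succ, Option.some.injEq] at hg
      have key : ∀ X : Tm, liftN (k+1) A = X → liftN (k+1+1) A = lift 0 X := by
        rintro X hX; rw [liftN_succ', hX]
      rcases ih k A hg with ⟨h1, h2⟩|⟨h1, h2⟩|⟨h1, h2⟩|⟨h1, h2⟩|⟨h1, h2⟩|⟨h1, h2⟩|⟨h1, h2⟩ <;>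
        [skip; skip; skip; skip; skip; skip; skip] <;> rw [key _ h2]
      · refine .inl ⟨by omega, ?_⟩
        simp only [lift]; split_ifs <;>
          first | (exfalso; omega)
                | (simp only [Tm.pi.injEq, Tm.app.injEq, Tm.var.injEq, and_true, true_and];
                   try omega)
                | rfl
      · refine .inr (.inl ⟨by omega, ?_⟩)
        simp only [lift]; split_ifs <;>
          first | (exfalso; omega)
                | (simp only [Tm.pi.injEq, Tm.app.injEq, Tm.var.injEq, and_true, true_and];
                   try omega)
                | rfl
      · refine .inr (.inr (.inl ⟨by omega, ?_⟩))
        simp only [lift]; split_ifs <;>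
          first | (exfalso; omega)
                | (simp only [Tm.pi.injEq, Tm.app.injEq, Tm.var.injEq, and_true, true_and];
                   try omega)
                | rfl
      · refine .inr (.inr (.inr (.inl ⟨by omega, ?_⟩)))
        simp only [lift]; split_ifs <;>
          first | (exfalso; omega)
                | (simp only [Tm.pi.injEq, Tm.app.injEq, Tm.var.injEq, and_true, true_and];
                   try omega)
                | rfl
      · refine .inr (.inr (.inr (.inr (.inl ⟨by omega, ?_⟩))))
        simp only [lift]; split_ifs <;>
          first | (exfalso; omega)
                | (simp only [Tm.pi.injEq, Tm.app.injEq, Tm.var.injEq, and_true, true_and];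
                   try omega)
                | rfl
      · refine .inr (.inr (.inr (.inr (.inr (.inl ⟨?_, ?_⟩)))))
        · omega
        simp only [lift]; split_ifs <;>
          first | (exfalso; omega)
                | (simp only [Tm.pi.injEq, Tm.app.injEq, Tm.var.injEq, and_true, true_and];
                   try omega)
                | rfl
      · refine .inr (.inr (.inr (.inr (.inr (.inr ⟨by omega, ?_⟩)))))
        rfl
/-! ### The spine grammar and the head classification lemma -/

inductive G (m : ℕ) : Tm → Prop
  | c : G m (.var (3+m))
  | d : G m (.var (2+m))
  | ap {k s} : (k < m ∨ k = 4+m ∨ k = 5+m) → G m s → G m (.app (.var k) s)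

def Ne' (t : Tm) : Prop := (∃ k, t = .var k) ∨ ∃ a b, t = .app a b

def Disj (m : ℕ) (t C : Tm) : Prop :=
  (G m t ∧ Conv C (.var (6+m))) ∨
  ((t = .var (5+m) ∨ t = .var (4+m) ∨ ∃ k, k < m ∧ t = .var k) ∧
    Conv C (.pi (.var (6+m)) (.var (7+m)))) ∨
  (t = .var (1+m) ∧ Conv C (.pi (.var (6+m)) .type)) ∨
  (t = .var m ∧
    Conv C (.pi (.var (6+m)) (.pi (.app (.var (2+m)) (.var 0)) (.var (8+m))))) ∨
  (Conv C .type) ∨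
  (∃ u, t = .app (.var m) u ∧ Normal u ∧
    Conv C (.pi (.app (.var (1+m)) u) (.var (7+m))))

theorem subst0_pi_Pu (m : ℕ) (u : Tm) :
    subst 0 u (.pi (.app (.var (2+m)) (.var 0)) (.var (8+m))) =
      .pi (.app (.var (1+m)) u) (.var (7+m)) := by
  simp only [subst]; split_ifs <;>
    first | (exfalso; omega)
          | (simp only [Tm.pi.injEq, Tm.app.injEq, Tm.var.injEq, and_true, true_and];
             try omega)
          | rfl

/-- A sort is not convertible to a normal application, variable, etc. -/
theorem conv_to_napp {C u : Tm} {k : ℕ} (hu : Normal (.app (.var k) u))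
    (hC : Conv C (.app (.var k) u)) :
    (∀ n, ¬ Conv C (.var n)) ∧ ¬ Conv C .type ∧ ¬ Conv C .kind ∧
      ∀ A B, ¬ Conv C (.pi A B) := by
  refine ⟨?_, ?_, ?_, ?_⟩
  · intro n h
    have := conv_normal_eq (conv_trans (conv_symm h) hC) (normal_var n) hu
    simp at this
  · intro h
    have := conv_normal_eq (conv_trans (conv_symm h) hC) normal_type hu
    simp at this
  · intro h
    have := conv_normal_eq (conv_trans (conv_symm h) hC) normal_kind hu
    simp at this
  · intro A B h
    exact conv_pi_normal hu (conv_trans (conv_symm h) hC) (by intro A' B' he; cases he)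

theorem head_lemma : ∀ t, Normal t → ∀ m C, Typing (ctxN m) t C →
    (Ne' t → Disj m t C) ∧
    (∀ u, Normal (.app (.var (1+m)) u) → Conv C (.app (.var (1+m)) u) → False) := by
  intro t
  induction t with
  | type =>
    intro _ m C h
    have hC := inv_type h
    refine ⟨?_, ?_⟩
    · rintro (⟨k, hk⟩ | ⟨a, b, hk⟩) <;> simp at hk
    · intro u hu hc
      exact (conv_to_napp hu hc).2.2.1 hC
  | kind => intro _ m C h; exact (inv_kind h).elim
  | var n =>
    intro _ m C h
    obtain ⟨A, hg, hc⟩ := inv_var h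
    rcases ctxN_types m n A hg with ⟨h1, h2⟩|⟨h1, h2⟩|⟨h1, h2⟩|⟨h1, h2⟩|⟨h1, h2⟩|⟨h1, h2⟩|⟨h1, h2⟩ <;>
      rw [h2] at hc
    · exact ⟨fun _ => .inr (.inl ⟨.inr (.inr ⟨n, h1, rfl⟩), hc⟩),
        fun u hu hcu => (conv_to_napp hu hcu).2.2.2 _ _ hc⟩
    · subst h1
      exact ⟨fun _ => .inr (.inr (.inr (.inl ⟨rfl, hc⟩))),
        fun u hu hcu => (conv_to_napp hu hcu).2.2.2 _ _ hc⟩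
    · subst h1
      exact ⟨fun _ => .inr (.inr (.inl ⟨rfl, hc⟩)),
        fun u hu hcu => (conv_to_napp hu hcu).2.2.2 _ _ hc⟩
    · subst h1
      exact ⟨fun _ => .inl ⟨G.d, hc⟩,
        fun u hu hcu => (conv_to_napp hu hcu).1 _ hc⟩
    · subst h1
      exact ⟨fun _ => .inl ⟨G.c, hc⟩,
        fun u hu hcu => (conv_to_napp hu hcu).1 _ hc⟩
    · refine ⟨fun _ => .inr (.inl ⟨?_, hc⟩),
        fun u hu hcu => (conv_to_napp hu hcu).2.2.2 _ _ hc⟩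
      rcases h1 with rfl | rfl
      · exact .inr (.inl rfl)
      · exact .inl rfl
    · subst h1
      exact ⟨fun _ => .inr (.inr (.inr (.inr (.inl hc)))),
        fun u hu hcu => (conv_to_napp hu hcu).2.1 hc⟩
  | lam A b ihA ihb =>
    intro hN m C h
    obtain ⟨B, hb, hc⟩ := inv_lam h
    refine ⟨?_, ?_⟩
    · rintro (⟨k, hk⟩ | ⟨x, y, hk⟩) <;> simp at hk
    · intro u hu hcu
      exact (conv_to_napp hu hcu).2.2.2 _ _ hc
  | pi A B ihA ihB =>
    intro hN m C h
    obtain ⟨s, hs, hc⟩ := inv_pi h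
    refine ⟨?_, ?_⟩
    · rintro (⟨k, hk⟩ | ⟨x, y, hk⟩) <;> simp at hk
    · intro u hu hcu
      rcases hs with rfl | rfl
      · exact (conv_to_napp hu hcu).2.1 hc
      · exact (conv_to_napp hu hcu).2.2.1 hc
  | app a b iha ihb =>
    intro hN m C h
    obtain ⟨hNa, hNb, hnl⟩ := normal_app hN
    obtain ⟨A, B, ha, hb, hC⟩ := inv_app h
    have hnea : Ne' a := by
      cases a with
      | lam A' b' => exact absurd rfl (hnl A' b')
      | type => exact (conv_pi_sort (.inr rfl) (inv_type ha)).elim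
      | kind => exact (inv_kind ha).elim
      | pi A' B' =>
        obtain ⟨s, hs, hc⟩ := inv_pi ha
        exact (conv_pi_sort hs hc).elim
      | var k => exact .inl ⟨k, rfl⟩
      | app x y => exact .inr ⟨x, y, rfl⟩
    have hda := (iha hNa m (.pi A B) ha).1 hnea
    rcases hda with ⟨hG, hconv⟩|⟨hv, hconv⟩|⟨rfl, hconv⟩|⟨rfl, hconv⟩|hconv|⟨u, rfl, hNu, hconv⟩
    · exact (conv_pi_var hconv).elim
    · -- a has type T → T : t is a spine application
      obtain ⟨hA, hB⟩ := conv_pi_inj hconv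
      -- classify the argument b
      have hGb : G m b := by
        have hneb : Ne' b := by
          cases b with
          | lam A' b' =>
            obtain ⟨B', -, hc⟩ := inv_lam hb
            exact (conv_pi_var (conv_trans (conv_symm hc) hA)).elim
          | type => exact absurd (conv_normal_eq (conv_trans (conv_symm (inv_type hb)) hA)
              normal_kind (normal_var _)) (by simp)
          | kind => exact (inv_kind hb).elim
          | pi A' B' =>
            obtain ⟨s, hs, hc⟩ := inv_pi hb
            have := conv_normal_eq (conv_trans (conv_symm hc) hA)
              (by rcases hs with rfl | rfl; exacts [normal_type, normal_kind]) (normal_var _)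
            rcases hs with rfl | rfl <;> simp at this
          | var k => exact .inl ⟨k, rfl⟩
          | app x y => exact .inr ⟨x, y, rfl⟩
        have hdb := (ihb hNb m A hb).1 hneb
        rcases hdb with ⟨hG', hconv'⟩|⟨hv', hconv'⟩|⟨rfl, hconv'⟩|⟨rfl, hconv'⟩|hconv'|⟨u, rfl, hNu, hconv'⟩
        · exact hG'
        · exact (conv_pi_var (conv_trans (conv_symm hconv') hA)).elim
        · exact (conv_pi_var (conv_trans (conv_symm hconv') hA)).elim
        · exact (conv_pi_var (conv_trans (conv_symm hconv') hA)).elim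
        · exact absurd (conv_normal_eq (conv_trans (conv_symm hconv') hA)
            normal_type (normal_var _)) (by simp)
        · exact (conv_pi_var (conv_trans (conv_symm hconv') hA)).elim
      have hCval : Conv C (.var (6+m)) := by
        refine conv_trans hC ?_
        have h' := conv_subst hB 0 b
        rw [subst_var_gt (by omega : 0 < 7+m),
          (by omega : (7:ℕ)+m-1 = 6+m)] at h'
        exact h'
      refine ⟨fun _ => .inl ⟨?_, hCval⟩,
        fun u hu hcu => (conv_to_napp hu hcu).1 _ hCval⟩
      rcases hv with rfl | rfl | ⟨k, hk, rfl⟩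
      · exact G.ap (.inr (.inr rfl)) hGb
      · exact G.ap (.inr (.inl rfl)) hGb
      · exact G.ap (.inl hk) hGb
    · -- a = P
      obtain ⟨hA, hB⟩ := conv_pi_inj hconv
      have hCty : Conv C .type := conv_trans hC (conv_subst hB 0 b)
      exact ⟨fun _ => .inr (.inr (.inr (.inr (.inl hCty)))),
        fun u hu hcu => (conv_to_napp hu hcu).2.1 hCty⟩
    · -- a = F
      obtain ⟨hA, hB⟩ := conv_pi_inj hconv
      have hCF : Conv C (.pi (.app (.var (1+m)) b) (.var (7+m))) := by
        refine conv_trans hC ?_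
        have := conv_subst hB 0 b
        rwa [subst0_pi_Pu] at this
      exact ⟨fun _ => .inr (.inr (.inr (.inr (.inr ⟨b, rfl, hNb, hCF⟩)))),
        fun u hu hcu => (conv_to_napp hu hcu).2.2.2 _ _ hCF⟩
    · exact (conv_pi_sort (.inl rfl) hconv).elim
    · -- a = F applied once: the argument b would inhabit (P u), impossible
      obtain ⟨hA, hB⟩ := conv_pi_inj hconv
      exact ((ihb hNb m A hb).2 u (normal_app_var hNu) hA).elim
/-! ### Classification of normal terms of the iterated arrow type -/

theorem normal_pi_vars (x y : ℕ) : Normal (.pi (.var x) (.var y)) := by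
  rintro u h
  cases h with
  | piA _ h' => cases h'
  | piB _ h' => cases h'

theorem body_classify {m t C} (hN : Normal t) (h : Typing (ctxN m) t C)
    (hc : Conv C (.var (6+m))) : G m t := by
  cases t with
  | type =>
    have := conv_normal_eq (conv_trans (conv_symm (inv_type h)) hc)
      normal_kind (normal_var _)
    simp at this
  | kind => exact (inv_kind h).elim
  | lam A b =>
    obtain ⟨B, -, hc'⟩ := inv_lam h
    exact (conv_pi_var (conv_trans (conv_symm hc') hc)).elim
  | pi A B =>
    obtain ⟨s, hs, hc'⟩ := inv_pi h
    have := conv_normal_eq (conv_trans (conv_symm hc') hc)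
      (by rcases hs with rfl | rfl; exacts [normal_type, normal_kind]) (normal_var _)
    rcases hs with rfl | rfl <;> simp at this
  | var n =>
    rcases (head_lemma _ hN m C h).1 (.inl ⟨n, rfl⟩) with
      ⟨hG, -⟩|⟨-, h2⟩|⟨-, h2⟩|⟨-, h2⟩|h2|⟨u, -, hNu, h2⟩
    · exact hG
    · exact (conv_pi_var (conv_trans (conv_symm h2) hc)).elim
    · exact (conv_pi_var (conv_trans (conv_symm h2) hc)).elim
    · exact (conv_pi_var (conv_trans (conv_symm h2) hc)).elim
    · have := conv_normal_eq (conv_trans (conv_symm h2) hc) normal_type (normal_var _)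
      simp at this
    · exact (conv_pi_var (conv_trans (conv_symm h2) hc)).elim
  | app a b =>
    rcases (head_lemma _ hN m C h).1 (.inr ⟨a, b, rfl⟩) with
      ⟨hG, -⟩|⟨-, h2⟩|⟨-, h2⟩|⟨-, h2⟩|h2|⟨u, -, hNu, h2⟩
    · exact hG
    · exact (conv_pi_var (conv_trans (conv_symm h2) hc)).elim
    · exact (conv_pi_var (conv_trans (conv_symm h2) hc)).elim
    · exact (conv_pi_var (conv_trans (conv_symm h2) hc)).elim
    · have := conv_normal_eq (conv_trans (conv_symm h2) hc) normal_type (normal_var _)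
      simp at this
    · exact (conv_pi_var (conv_trans (conv_symm h2) hc)).elim

theorem peel : ∀ (j m t C), Normal t → Typing (ctxN m) t C →
    Conv C (nArr (6+m) j) →
    ∃ body, t = lamChain (6+m) j body ∧ G (m+j) body := by
  intro j
  induction j with
  | zero =>
    intro m t C hN h hc
    exact ⟨t, rfl, body_classify hN h hc⟩
  | succ j ih =>
    intro m t C hN h hc
    simp only [nArr] at hc
    cases t with
    | type => exact (conv_pi_sort (.inr rfl) (conv_trans (conv_symm hc) (inv_type h))).elim
    | kind => exact (inv_kind h).elim
    | pi A B =>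
      obtain ⟨s, hs, hc'⟩ := inv_pi h
      exact (conv_pi_sort hs (conv_trans (conv_symm hc) hc')).elim
    | var n =>
      rcases (head_lemma _ hN m C h).1 (.inl ⟨n, rfl⟩) with
        ⟨-, h2⟩|⟨-, h2⟩|⟨-, h2⟩|⟨-, h2⟩|h2|⟨u, -, hNu, h2⟩
      · exact (conv_pi_var (conv_trans (conv_symm hc) h2)).elim
      · exact (conv_pi_var (conv_symm (conv_pi_inj (conv_trans (conv_symm h2) hc)).1)).elim
      · exact (conv_pi_var (conv_symm (conv_pi_inj (conv_trans (conv_symm h2) hc)).1)).elim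
      · exact (conv_pi_var (conv_symm (conv_pi_inj (conv_trans (conv_symm h2) hc)).1)).elim
      · exact (conv_pi_sort (.inl rfl) (conv_trans (conv_symm hc) h2)).elim
      · have := (conv_pi_inj (conv_trans (conv_symm h2) hc)).1
        exact (conv_pi_normal (normal_app_var hNu) (conv_symm this)
          (by intro A' B' he; cases he)).elim
    | app a b =>
      rcases (head_lemma _ hN m C h).1 (.inr ⟨a, b, rfl⟩) with
        ⟨-, h2⟩|⟨-, h2⟩|⟨-, h2⟩|⟨-, h2⟩|h2|⟨u, -, hNu, h2⟩
      · exact (conv_pi_var (conv_trans (conv_symm hc) h2)).elim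
      · exact (conv_pi_var (conv_symm (conv_pi_inj (conv_trans (conv_symm h2) hc)).1)).elim
      · exact (conv_pi_var (conv_symm (conv_pi_inj (conv_trans (conv_symm h2) hc)).1)).elim
      · exact (conv_pi_var (conv_symm (conv_pi_inj (conv_trans (conv_symm h2) hc)).1)).elim
      · exact (conv_pi_sort (.inl rfl) (conv_trans (conv_symm hc) h2)).elim
      · have := (conv_pi_inj (conv_trans (conv_symm h2) hc)).1
        exact (conv_pi_normal (normal_app_var hNu) (conv_symm this)
          (by intro A' B' he; cases he)).elim
    | lam A b =>
      obtain ⟨B, hb, hc'⟩ := inv_lam h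
      obtain ⟨hA, hB⟩ := conv_pi_inj (conv_trans (conv_symm hc') hc)
      obtain ⟨hNA, hNb⟩ := normal_lam hN
      have hAeq : A = .pi (.var (6+m)) (.var (6+m+1)) :=
        conv_normal_eq hA hNA (normal_pi_vars _ _)
      subst hAeq
      have hb' : Typing (ctxN (m+1)) b B := by
        have e : 6+m+1 = 7+m := by omega
        rw [e] at hb
        exact hb
      obtain ⟨body, hbe, hG⟩ := ih (m+1) b B hNb hb' hB
      refine ⟨body, ?_, ?_⟩
      · simp only [lamChain]
        rw [show (6:ℕ)+(m+1) = 6+m+1 from by omega] at hbe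
        rw [hbe]
      · rw [show m+(j+1) = m+1+j by omega]
        exact hG
/-! ### Computing the application of the chain to the identities -/

def substAll : ℕ → Tm → Tm
  | 0, b => b
  | k+1, b => substAll k (subst k (liftN k idT) b)

theorem liftN_idT (k : ℕ) : liftN k idT = .lam (.var (6+k)) (.var 0) := by
  induction k with
  | zero => rfl
  | succ k ih =>
    rw [liftN_succ', ih]
    simp only [lift]; split_ifs <;>
      first | (exfalso; omega)
            | (simp only [Tm.lam.injEq, Tm.var.injEq, and_true, true_and]; try omega)
            | rfl

theorem substAll_app (k : ℕ) (a b : Tm) :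
    substAll k (.app a b) = .app (substAll k a) (substAll k b) := by
  induction k generalizing a b with
  | zero => rfl
  | succ k ih => simp only [substAll, subst, ih]

theorem substAll_lamvar : ∀ k j, k ≤ j →
    substAll k (.lam (.var (6+j)) (.var 0)) = .lam (.var (6+(j-k))) (.var 0) := by
  intro k
  induction k with
  | zero => intro j _; simp only [Nat.sub_zero]; rfl
  | succ k ih =>
    intro j hj
    show substAll k (subst k (liftN k idT) (.lam (.var (6+j)) (.var 0))) = _
    have e1 : subst k (liftN k idT) (.lam (.var (6+j)) (.var 0)) =
        .lam (.var (6+(j-1))) (.var 0) := by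
      simp only [subst]
      rw [if_neg (by omega), if_pos (by omega), if_neg (by omega), if_neg (by omega)]
      simp only [Tm.lam.injEq, Tm.var.injEq, and_true]
      omega
    rw [e1, ih (j-1) (by omega)]
    simp only [Tm.lam.injEq, Tm.var.injEq, and_true]
    omega

theorem substAll_var_ge : ∀ k j, k ≤ j → substAll k (.var j) = .var (j-k) := by
  intro k
  induction k with
  | zero => intro j _; simp [substAll]
  | succ k ih =>
    intro j hj
    show substAll k (subst k (liftN k idT) (.var j)) = _
    rw [subst_var_gt (by omega), ih (j-1) (by omega)]
    simp only [Tm.var.injEq]; omega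

theorem substAll_var_lt : ∀ k j, j < k → substAll k (.var j) = idT := by
  intro k
  induction k with
  | zero => intro j hj; omega
  | succ k ih =>
    intro j hj
    show substAll k (subst k (liftN k idT) (.var j)) = _
    rcases Nat.lt_or_ge j k with h | h
    · rw [subst_var_lt h, ih j h]
    · have e : subst k (liftN k idT) (.var j) = liftN k idT := by
        rw [(by omega : j = k), subst_var_eq]
      rw [e, liftN_idT, substAll_lamvar k k (le_refl k)]
      simp [idT]

theorem subst_lamChain : ∀ (j k : ℕ) (u b : Tm),
    subst k u (lamChain (7+k) j b) = lamChain (6+k) j (subst (k+j) (liftN j u) b) := by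
  intro j
  induction j with
  | zero => intro k u b; rfl
  | succ j ih =>
    intro k u b
    show subst k u (.lam (.pi (.var (7+k)) (.var (7+k+1))) (lamChain (7+k+1) j b)) = _
    simp only [subst]
    rw [if_neg (by omega : ¬7+k = k), if_pos (by omega : k < 7+k),
      if_neg (by omega : ¬7+k+1 = k+1), if_pos (by omega : k+1 < 7+k+1)]
    have e1 : lamChain (7+k+1) j b = lamChain (7+(k+1)) j b := rfl
    rw [e1, ih (k+1) (lift 0 u) b]
    show Tm.lam (.pi (.var (7+k-1)) (.var (7+k+1-1))) (lamChain (6+(k+1)) j _) =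
      .lam (.pi (.var (6+k)) (.var (6+k+1))) (lamChain (6+k+1) j _)
    have e2 : 7+k-1 = 6+k := by omega
    have e3 : 7+k+1-1 = 6+k+1 := by omega
    have e4 : (6:ℕ)+(k+1) = 6+k+1 := by omega
    have e5 : k+1+j = k+(j+1) := by omega
    have e6 : liftN j (lift 0 u) = liftN (j+1) u := by
      show (lift 0)^[j] ((lift 0) u) = (lift 0)^[j+1] u
      rw [Function.iterate_succ_apply]
    rw [e2, e3, e4, e5, e6]

theorem chain_red : ∀ (j : ℕ) (b : Tm),
    Red (appList (lamChain 6 j b) (List.replicate j idT)) (substAll j b) := by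
  intro j
  induction j with
  | zero => intro b; exact .refl
  | succ j ih =>
    intro b
    have estep : Step (.app (lamChain 6 (j+1) b) idT)
        (lamChain 6 j (subst j (liftN j idT) b)) := by
      show Step (.app (.lam (.pi (.var 6) (.var 7)) (lamChain 7 j b)) idT) _
      have := Step.beta (.pi (.var 6) (.var 7)) (lamChain 7 j b) idT
      have e : subst 0 idT (lamChain 7 j b) = lamChain 6 j (subst j (liftN j idT) b) := by
        have := subst_lamChain j 0 idT b
        simpa using this
      rwa [e] at this
    show Red (appList (.app (lamChain 6 (j+1) b) idT) (List.replicate j idT)) _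
    have hred1 : Red (appList (.app (lamChain 6 (j+1) b) idT) (List.replicate j idT))
        (appList (lamChain 6 j (subst j (liftN j idT) b)) (List.replicate j idT)) := by
      clear ih
      generalize hx : Tm.app (lamChain 6 (j+1) b) idT = x at estep ⊢
      generalize hy : lamChain 6 j (subst j (liftN j idT) b) = y at estep ⊢
      have : ∀ (us : List Tm) (x y : Tm), Step x y → Red (appList x us) (appList y us) := by
        intro us
        induction us with
        | nil => intro x y h; exact .single h
        | cons u us ihus => intro x y h; exact ihus _ _ (Step.appL u h)
      exact this _ _ _ estep
    exact hred1.trans (ih _)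

theorem spine_nil (n : ℕ) : spine n [] = .var (3+n) := rfl

theorem spine_cons (n i : ℕ) (l : List ℕ) :
    spine n (i :: l) = .app (.var (n-1-i)) (spine n l) := rfl

theorem gred {n : ℕ} : ∀ {body}, G n body → ∃ u, Red (substAll n body) u ∧ Normal u ∧
    (u = .var 3 → ∃ is : List (Fin n), body = spine n (is.map Fin.val)) := by
  intro body hG
  induction hG with
  | c =>
    refine ⟨.var 3, ?_, normal_var 3, fun _ => ⟨[], rfl⟩⟩
    rw [substAll_var_ge n (3+n) (by omega), (by omega : 3+n-n = 3)]
    exact .refl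
  | d =>
    refine ⟨.var 2, ?_, normal_var 2, fun he => by simp at he⟩
    rw [substAll_var_ge n (2+n) (by omega), (by omega : 2+n-n = 2)]
    exact .refl
  | ap hk hs ihs =>
    rename_i k s
    obtain ⟨u, hru, hNu, hiu⟩ := ihs
    rw [substAll_app]
    rcases hk with hk | hk | hk
    · -- bound variable : the identity collapses
      rw [substAll_var_lt n k hk]
      refine ⟨u, ?_, hNu, fun he => ?_⟩
      · have h1 : Red (.app idT (substAll n s)) (.app idT u) := red_appR hru
        have h2 : Step (.app idT u) u := by
          have := Step.beta (.var 6) (.var 0) u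
          rwa [subst_var_eq] at this
        exact h1.tail h2
      · obtain ⟨is, hs'⟩ := hiu he
        refine ⟨⟨n-1-k, by omega⟩ :: is, ?_⟩
        rw [List.map_cons, spine_cons]
        show Tm.app (.var k) s = .app (.var (n-1-(n-1-k))) (spine n (is.map Fin.val))
        rw [← hs', (by omega : n-1-(n-1-k) = k)]
    · subst hk
      rw [substAll_var_ge n (4+n) (by omega), (by omega : 4+n-n = 4)]
      exact ⟨.app (.var 4) u, red_appR hru, normal_app_var hNu, fun he => by simp at he⟩
    · subst hk
      rw [substAll_var_ge n (5+n) (by omega), (by omega : 5+n-n = 5)]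
      exact ⟨.app (.var 5) u, red_appR hru, normal_app_var hNu, fun he => by simp at he⟩

/-- a normal term of type (T→T)→...→(T→T)→T in Ctx0 which maps
the n identities to c is λx₁:T→T....λxₙ:T→T.(x_{i₁} (... (x_{iₚ} c)...)). -/
theorem normal_term_is_spine (n : ℕ) (t : Tm)
    (hn : Normal t) (ht : Typing Ctx0 t (nArr 6 n))
    (hred : Red (appList t (List.replicate n idT)) (.var 3)) :
    ∃ is : List (Fin n), t = lamChain 6 n (spine n (is.map Fin.val)) := by
  have ht' : Typing (ctxN 0) t (nArr (6+0) n) := ht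
  obtain ⟨body, hte, hG⟩ := peel n 0 t (nArr (6+0) n) hn ht' (.refl _)
  have hG' : G n body := by rwa [(by omega : 0+n = n)] at hG
  have hte' : t = lamChain 6 n body := hte
  subst hte'
  have h1 : Red (appList (lamChain 6 n body) (List.replicate n idT)) (substAll n body) :=
    chain_red n body
  obtain ⟨u, h2, hNu, h3⟩ := gred hG'
  have hconv : Conv u (.var 3) :=
    conv_trans (conv_symm (conv_red (h1.trans h2))) (conv_red hred)
  obtain ⟨is, hbe⟩ := h3 (conv_normal_eq hconv hNu (normal_var 3))
  exact ⟨is, by rw [← hbe]⟩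

end LamPi
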